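/- arXiv:0811.1818 — 4 statements merged into one kernel-verified Lean document; each statement's English description precedes it below -/
import Mathlib

section
/- Let A be an invertible symmetric n×n complex matrix, and let w⁽¹⁾, w⁽²⁾ ∈ ℂⁿ be linearly independent contact points, i.e., A w⁽ʲ⁾ = (1/conj(μⱼ)) conj(w⁽ʲ⁾) for nonzero complex numbers μ₁, μ₂. If |μ₁| ≠ |μ₂|, then for all nonzero complex numbers T₁, T₂, the point w = T₁ w⁽¹⁾ + T₂ w⁽²⁾ is not a contact point: there is no nonzero μ ∈ ℂ with A w = (1/conj μ) conj(w). -/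
/-!
Applying `A` to `w = T₁ w₁ + T₂ w₂` gives `(T₁ / conj μ₁) conj w₁ + (T₂ / conj μ₂) conj w₂`,
while the contact equation for `w` gives `(conj T₁ / conj μ) conj w₁ + (conj T₂ / conj μ) conj w₂`.
Conjugation preserves linear independence, so the coefficients agree, and taking absolute values
yields `|μ₁| = |μ| = |μ₂|`.
-/

open ComplexConjugate

theorem LinearIndependent.star {ι R M : Type*} [CommSemiring R] [StarRing R] [AddCommMonoid M]
    [Module R M] [StarAddMonoid M] [StarModule R M] {v : ι → M} (hv : LinearIndependent R v) :
    LinearIndependent R (Star.star ∘ v) :=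
  hv.map_of_surjective_injectiveₛ Star.star (starAddEquiv : M ≃+ M).toAddMonoidHom
    star_involutive.surjective star_involutive.injective fun r m ↦ star_smul r m

theorem Complex.norm_eq_of_div_conj_eq {T μ₁ μ : ℂ} (hT : T ≠ 0)
    (h : T / conj μ₁ = conj T / conj μ) : ‖μ₁‖ = ‖μ‖ := by
  have hnorm := congrArg norm h
  simp only [norm_div, Complex.norm_conj] at hnorm
  exact inv_injective (mul_left_cancel₀ (norm_ne_zero_iff.mpr hT) hnorm)

namespace Matrix

variable {n : Type*} [Fintype n]

def IsContactPoint (A : Matrix n n ℂ) (w : n → ℂ) (μ : ℂ) : Prop :=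
  A *ᵥ w = (1 / conj μ) • star w

theorem IsContactPoint.mulVec_add_smul {A : Matrix n n ℂ} {w₁ w₂ : n → ℂ} {μ₁ μ₂ : ℂ}
    (h₁ : A.IsContactPoint w₁ μ₁) (h₂ : A.IsContactPoint w₂ μ₂) (T₁ T₂ : ℂ) :
    A *ᵥ (T₁ • w₁ + T₂ • w₂) = (T₁ / conj μ₁) • star w₁ + (T₂ / conj μ₂) • star w₂ := by
  rw [mulVec_add, mulVec_smul, mulVec_smul, h₁, h₂, smul_smul, smul_smul, mul_one_div,
    mul_one_div]

theorem IsContactPoint.norm_eq_of_add_smul {A : Matrix n n ℂ} {w₁ w₂ : n → ℂ} {μ₁ μ₂ μ T₁ T₂ : ℂ}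
    (hind : LinearIndependent ℂ ![w₁, w₂]) (h₁ : A.IsContactPoint w₁ μ₁)
    (h₂ : A.IsContactPoint w₂ μ₂) (hT₁ : T₁ ≠ 0) (hT₂ : T₂ ≠ 0)
    (h : A.IsContactPoint (T₁ • w₁ + T₂ • w₂) μ) : ‖μ₁‖ = ‖μ‖ ∧ ‖μ₂‖ = ‖μ‖ := by
  have hind' : LinearIndependent ℂ ![star w₁, star w₂] := by
    have h := hind.star
    rw [← FinVec.map_eq] at h
    exact h
  have hcoeff : (T₁ / conj μ₁) • star w₁ + (T₂ / conj μ₂) • star w₂ =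
      (conj T₁ / conj μ) • star w₁ + (conj T₂ / conj μ) • star w₂ := by
    rw [← h₁.mulVec_add_smul h₂, h, star_add, star_smul, star_smul, smul_add, smul_smul,
      smul_smul, one_div_mul_eq_div, one_div_mul_eq_div]
    simp only [Complex.star_def]
  obtain ⟨e₁, e₂⟩ := hind'.eq_of_pair hcoeff
  exact ⟨Complex.norm_eq_of_div_conj_eq hT₁ e₁, Complex.norm_eq_of_div_conj_eq hT₂ e₂⟩

end Matrix

theorem stmt4_general {n : ℕ} (A : Matrix (Fin n) (Fin n) ℂ)
    (w₁ w₂ : Fin n → ℂ) (μ₁ μ₂ : ℂ)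
    (h1 : A.mulVec w₁ = (1 / starRingEnd ℂ μ₁) • star w₁)
    (h2 : A.mulVec w₂ = (1 / starRingEnd ℂ μ₂) • star w₂)
    (hind : LinearIndependent ℂ ![w₁, w₂])
    (habs : ‖μ₁‖ ≠ ‖μ₂‖) :
    ∀ T₁ T₂ : ℂ, T₁ ≠ 0 → T₂ ≠ 0 →
      ¬ ∃ μ : ℂ, μ ≠ 0 ∧
        A.mulVec (T₁ • w₁ + T₂ • w₂)
          = (1 / starRingEnd ℂ μ) • star (T₁ • w₁ + T₂ • w₂) := by
  rintro T₁ T₂ hT₁ hT₂ ⟨μ, -, hμ⟩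
  obtain ⟨e₁, e₂⟩ := Matrix.IsContactPoint.norm_eq_of_add_smul hind h1 h2 hT₁ hT₂ hμ
  exact habs (e₁.trans e₂.symm)

/-- If `w⁽¹⁾, w⁽²⁾` are linearly independent contact points with
`|μ₁| ≠ |μ₂|`, then no nontrivial combination `T₁ w⁽¹⁾ + T₂ w⁽²⁾` is a contact
point. -/
theorem stmt4 {n : ℕ} (A : Matrix (Fin n) (Fin n) ℂ)
    (hA : A.IsSymm) (hdet : A.det ≠ 0)
    (w₁ w₂ : Fin n → ℂ) (μ₁ μ₂ : ℂ) (hμ₁ : μ₁ ≠ 0) (hμ₂ : μ₂ ≠ 0)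
    (h1 : A.mulVec w₁ = (1 / starRingEnd ℂ μ₁) • star w₁)
    (h2 : A.mulVec w₂ = (1 / starRingEnd ℂ μ₂) • star w₂)
    (hind : LinearIndependent ℂ ![w₁, w₂])
    (habs : ‖μ₁‖ ≠ ‖μ₂‖) :
    ∀ T₁ T₂ : ℂ, T₁ ≠ 0 → T₂ ≠ 0 →
      ¬ ∃ μ : ℂ, μ ≠ 0 ∧
        A.mulVec (T₁ • w₁ + T₂ • w₂)
          = (1 / starRingEnd ℂ μ) • star (T₁ • w₁ + T₂ • w₂) :=
  stmt4_general A w₁ w₂ μ₁ μ₂ h1 h2 hind habs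
end

section
/- The set of invertible symmetric n×n complex matrices A such that A⁻¹ · conj(A⁻¹) has n pairwise distinct eigenvalues is dense in the space of all symmetric n×n complex matrices. -/
/-!
Perturb `A` along the real segment `B t = A + t • (D - A)`, where `D = diagonal (1, …, n)`.
Every `B t` is symmetric, and since `t` is real, `conj (B t) = conj A + t • (D - conj A)`,
so `N t = conj (B t) * B t` is a polynomial matrix in `t`. As
`(B t)⁻¹ * conj ((B t)⁻¹) = (N t)⁻¹`, it suffices that `N t` is invertible with separable
characteristic polynomial, i.e. that `disc (N t) * det (N t) ≠ 0`. This is a polynomial in `t`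
which does not vanish at `t = 1`, where `N 1 = D ^ 2`; so it vanishes for only finitely many `t`,
and `B t → A` as `t → 0` through the remaining values.
-/

open Polynomial Matrix

namespace Polynomial

variable {R S K : Type*} [CommRing R] [CommRing S] [Field K]

theorem Monic.discr_map [Nontrivial S] {f : R[X]} (hf : f.Monic) (φ : R →+* S) :
    (f.map φ).discr = φ f.discr := by
  have := φ.domain_nontrivial
  rcases Nat.eq_zero_or_pos f.natDegree with h0 | hpos
  · rw [hf.natDegree_eq_zero.mp h0, Polynomial.map_one, ← C_1, ← C_1, discr_C, discr_C, map_one]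
  have hdeg : (f.map φ).natDegree = f.natDegree := hf.natDegree_map φ
  have hres := resultant_deriv (f := f.map φ)
    (by rw [← natDegree_pos_iff_degree_pos, hdeg]; exact hpos)
  rw [hdeg, derivative_map, resultant_map_map,
    resultant_deriv (natDegree_pos_iff_degree_pos.mp hpos), (hf.map φ).leadingCoeff,
    hf.leadingCoeff, mul_one, mul_one, map_mul, map_pow, map_neg, map_one] at hres
  exact ((isUnit_neg_one.pow _).mul_left_cancel hres).symm

theorem Monic.discr_ne_zero_iff {f : K[X]} (hf : f.Monic) : f.discr ≠ 0 ↔ f.Separable := by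
  rcases Nat.eq_zero_or_pos f.natDegree with h0 | hpos
  · rw [hf.natDegree_eq_zero.mp h0, ← C_1, discr_C]
    simp
  obtain ⟨k, hk⟩ := Nat.exists_eq_add_of_le (natDegree_derivative_le f)
  have hres : resultant f (derivative f) =
      (-1) ^ (f.natDegree * (f.natDegree - 1) / 2) * f.discr := by
    have hdeg : resultant f (derivative f) f.natDegree (f.natDegree - 1) =
        resultant f (derivative f) := by
      rw [hk, resultant_add_right_deg _ _ _ _ _ le_rfl, hf.coeff_natDegree, one_pow, one_mul]
    rw [← hdeg, resultant_deriv (natDegree_pos_iff_degree_pos.mp hpos), hf.leadingCoeff, mul_one]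
  rw [separable_def, ← not_iff_not, not_not, ← (isUnit_neg_one.pow _).mul_right_eq_zero, ← hres,
    resultant_eq_zero_iff]
  simp [hf.ne_zero]

theorem eventually_cofinite_eval_ofReal_ne_zero {P : ℂ[X]} (hP : P ≠ 0) :
    ∀ᶠ t : ℝ in Filter.cofinite, P.eval (t : ℂ) ≠ 0 := by
  refine Filter.eventually_cofinite.mpr ?_
  simpa using (finite_setOfPred_isRoot hP).preimage Complex.ofReal_injective.injOn

end Polynomial

theorem Continuous.mem_closure_of_eventually_cofinite {X : Type*} [TopologicalSpace X]
    {γ : ℝ → X} (hγ : Continuous γ) {T : Set X} (hT : ∀ᶠ t in Filter.cofinite, γ t ∈ T)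
    (t₀ : ℝ) : γ t₀ ∈ closure T := by
  have hdense : Dense {t | γ t ∈ T} := by
    simpa only [Set.compl_ofPred, not_not] using
      Set.Countable.dense_compl ℝ (Filter.eventually_cofinite.mp hT).countable
  exact map_mem_closure hγ (hdense t₀) fun _ ht => ht

namespace Matrix

variable {ι R S K : Type*} [CommRing R] [CommRing S] [Field K]

theorem map_evalRingHom_map_C_add_X_smul_map_C (M N : Matrix ι ι R) (t : R) :
    (M.map C + (X : R[X]) • N.map C).map (evalRingHom t) = M + t • N := by
  ext i j
  simp only [map_apply, add_apply, smul_apply, smul_eq_mul, coe_evalRingHom, eval_add, eval_mul,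
    eval_X, eval_C]

theorem map_conj_add_ofReal_smul (M N : Matrix ι ι ℂ) (t : ℝ) :
    (M + (t : ℂ) • N).map (starRingEnd ℂ) =
      M.map (starRingEnd ℂ) + (t : ℂ) • N.map (starRingEnd ℂ) := by
  ext i j
  simp

variable [Fintype ι]

def HasDistinctEigenvalues (M : Matrix ι ι K) : Prop :=
  ∃ ev : ι → K, Function.Injective ev ∧ ∀ i, ∃ v : ι → K, v ≠ 0 ∧ M *ᵥ v = ev i • v

variable [DecidableEq ι]

theorem discr_map [Nontrivial S] (φ : R →+* S) (M : Matrix ι ι R) :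
    (M.map φ).discr = φ M.discr := by
  have := φ.domain_nontrivial
  rw [discr, discr, charpoly_map, (charpoly_monic M).discr_map]

theorem discr_ne_zero_iff {M : Matrix ι ι K} : M.discr ≠ 0 ↔ M.charpoly.Separable :=
  (charpoly_monic M).discr_ne_zero_iff

theorem discr_diagonal_ne_zero_iff {d : ι → K} :
    (diagonal d).discr ≠ 0 ↔ Function.Injective d := by
  rw [discr_ne_zero_iff, charpoly_diagonal, separable_prod_X_sub_C_iff]

theorem map_nonsing_inv (σ : K →+* K) {B : Matrix ι ι K} (hB : B.det ≠ 0) :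
    B⁻¹.map σ = (B.map σ)⁻¹ := by
  refine (inv_eq_left_inv ?_).symm
  rw [← RingHom.mapMatrix_apply, ← RingHom.mapMatrix_apply, ← map_mul,
    nonsing_inv_mul B hB.isUnit, map_one]

theorem eventually_cofinite_discr_ne_zero_and_det_ne_zero {F : Matrix ι ι ℂ[X]} {z : ℂ}
    (hdisc : (F.map (evalRingHom z)).discr ≠ 0) (hdet : (F.map (evalRingHom z)).det ≠ 0) :
    ∀ᶠ t : ℝ in Filter.cofinite,
      (F.map (evalRingHom (t : ℂ))).discr ≠ 0 ∧ (F.map (evalRingHom (t : ℂ))).det ≠ 0 := by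
  have heval : ∀ w : ℂ, (F.discr * F.det).eval w =
      (F.map (evalRingHom w)).discr * (F.map (evalRingHom w)).det := fun w => by
    rw [discr_map, ← RingHom.mapMatrix_apply, ← RingHom.map_det, ← map_mul, coe_evalRingHom]
  have hP : F.discr * F.det ≠ 0 := fun h =>
    mul_ne_zero hdisc hdet (by rw [← heval, h, eval_zero])
  filter_upwards [eventually_cofinite_eval_ofReal_ne_zero hP] with t ht
  exact mul_ne_zero_iff.mp (heval t ▸ ht)

theorem eventually_cofinite_discr_ne_zero_and_det_ne_zero_conj_mul_self_segment
    (A : Matrix ι ι ℂ) {D : Matrix ι ι ℂ} (hD : D.map (starRingEnd ℂ) = D)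
    (hdisc : (D * D).discr ≠ 0) (hdet : (D * D).det ≠ 0) :
    ∀ᶠ t : ℝ in Filter.cofinite,
      ((A + (t : ℂ) • (D - A)).map (starRingEnd ℂ) * (A + (t : ℂ) • (D - A))).discr ≠ 0 ∧
      ((A + (t : ℂ) • (D - A)).map (starRingEnd ℂ) * (A + (t : ℂ) • (D - A))).det ≠ 0 := by
  set Ā := A.map (starRingEnd ℂ)
  set F : Matrix ι ι ℂ[X] :=
    (Ā.map C + (X : ℂ[X]) • (D - Ā).map C) * (A.map C + (X : ℂ[X]) • (D - A).map C)
  have hF : ∀ t : ℝ, F.map (evalRingHom (t : ℂ)) =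
      (A + (t : ℂ) • (D - A)).map (starRingEnd ℂ) * (A + (t : ℂ) • (D - A)) := fun t => by
    rw [Matrix.map_mul, map_evalRingHom_map_C_add_X_smul_map_C,
      map_evalRingHom_map_C_add_X_smul_map_C, map_conj_add_ofReal_smul,
      Matrix.map_sub _ (map_sub _), hD]
  have hF1 : F.map (evalRingHom ((1 : ℝ) : ℂ)) = D * D := by
    rw [hF, Complex.ofReal_one, one_smul, add_sub_cancel, hD]
  filter_upwards [eventually_cofinite_discr_ne_zero_and_det_ne_zero (hF1 ▸ hdisc) (hF1 ▸ hdet)]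
    with t ht
  rwa [hF] at ht

theorem HasDistinctEigenvalues.inv {M : Matrix ι ι K} (hM : M.HasDistinctEigenvalues)
    (hdet : M.det ≠ 0) : M⁻¹.HasDistinctEigenvalues := by
  obtain ⟨ev, hinj, hev⟩ := hM
  have hsolve : ∀ {v : ι → K} {μ : K}, M *ᵥ v = μ • v → v = μ • M⁻¹ *ᵥ v := fun h => by
    rw [← mulVec_smul, ← h, mulVec_mulVec, nonsing_inv_mul M hdet.isUnit, one_mulVec]
  refine ⟨fun i => (ev i)⁻¹, fun i j hij => hinj (inv_injective hij), fun i => ?_⟩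
  obtain ⟨v, hv, hMv⟩ := hev i
  have hv' := hsolve hMv
  have hμ : ev i ≠ 0 := fun h => hv (by rwa [h, zero_smul] at hv')
  exact ⟨v, hv, by rw [hv', inv_smul_smul₀ hμ, ← hv']⟩

theorem hasDistinctEigenvalues_of_discr_ne_zero [IsAlgClosed K] {M : Matrix ι ι K}
    (hM : M.discr ≠ 0) : M.HasDistinctEigenvalues := by
  have hcard : Fintype.card (M.charpoly.rootSet K) = Fintype.card ι := by
    rw [card_rootSet_eq_natDegree (discr_ne_zero_iff.mp hM) (IsAlgClosed.splits _),
      charpoly_natDegree_eq_dim]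
  obtain e := Fintype.equivOfCardEq hcard.symm
  refine ⟨fun i => e i, Subtype.val_injective.comp e.injective, fun i => ?_⟩
  have hroot : Module.End.HasEigenvalue (toLin' M) (e i) := by
    rw [Module.End.hasEigenvalue_iff_isRoot_charpoly, charpoly_toLin']
    exact (mem_rootSet.mp (e i).2).2
  obtain ⟨v, hv⟩ := hroot.exists_hasEigenvector
  exact ⟨v, hv.2, by simpa using hv.apply_eq_smul⟩

theorem hasDistinctEigenvalues_inv_mul_map_inv [IsAlgClosed K] (σ : K →+* K) {B : Matrix ι ι K}
    (hdisc : (B.map σ * B).discr ≠ 0) (hdet : (B.map σ * B).det ≠ 0) :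
    (B⁻¹ * B⁻¹.map σ).HasDistinctEigenvalues := by
  have hB : B.det ≠ 0 := right_ne_zero_of_mul (det_mul _ B ▸ hdet)
  rw [map_nonsing_inv σ hB, ← mul_inv_rev]
  exact (hasDistinctEigenvalues_of_discr_ne_zero hdisc).inv hdet

end Matrix

/-- Invertible symmetric matrices `A` such that `A⁻¹ conj(A⁻¹)`
has `n` pairwise distinct eigenvalues are dense among all symmetric complex
`n×n` matrices. -/
theorem stmt6 {n : ℕ} :
    {A : Matrix (Fin n) (Fin n) ℂ | A.IsSymm} ⊆
      closure {A : Matrix (Fin n) (Fin n) ℂ | A.IsSymm ∧ A.det ≠ 0 ∧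
        ∃ ev : Fin n → ℂ, Function.Injective ev ∧
          ∀ i, ∃ v : Fin n → ℂ, v ≠ 0 ∧
            (A⁻¹ * (A⁻¹).map (starRingEnd ℂ)).mulVec v = ev i • v} := by
  intro A hA
  set D : Matrix (Fin n) (Fin n) ℂ := diagonal fun i => (i : ℕ) + 1
  have hD : D.map (starRingEnd ℂ) = D := by
    rw [diagonal_map (map_zero _)]
    simp [D]
  have hDD : D * D = diagonal fun i : Fin n => ((((i : ℕ) + 1) * ((i : ℕ) + 1) : ℕ) : ℂ) := by
    simp [D, diagonal_mul_diagonal]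
  have hDdisc : (D * D).discr ≠ 0 := by
    rw [hDD, discr_diagonal_ne_zero_iff]
    intro i j hij
    exact Fin.ext (by simpa using Nat.mul_self_inj.mp (Nat.cast_injective hij))
  have hDdet : (D * D).det ≠ 0 := by
    rw [hDD, det_diagonal]
    exact Finset.prod_ne_zero_iff.mpr fun i _ => Nat.cast_ne_zero.mpr (by positivity)
  rw [show A = A + ((0 : ℝ) : ℂ) • (D - A) by simp]
  have hγ : Continuous fun t : ℝ => A + (t : ℂ) • (D - A) := by fun_prop
  refine hγ.mem_closure_of_eventually_cofinite ?_ 0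
  filter_upwards [eventually_cofinite_discr_ne_zero_and_det_ne_zero_conj_mul_self_segment A hD
    hDdisc hDdet] with t ⟨hdisc, hdet⟩
  refine ⟨hA.add (((isSymm_diagonal _).sub hA).smul _), ?_,
    hasDistinctEigenvalues_inv_mul_map_inv _ hdisc hdet⟩
  rw [det_mul] at hdet
  exact right_ne_zero_of_mul hdet
end

section
/- Let λ₁, ..., λₙ be nonzero complex numbers with pairwise distinct absolute values, f(z) = Σⱼ λⱼ zⱼ², and Σ = { z ∈ ℂⁿ : ∃ ξ ∈ ℂ, 2 conj(λⱼ) conj(zⱼ) = ξ zⱼ for all j }. Then Σ \ {0} = ⋃ᵢ Σᵢ where Σᵢ = { z : zⱼ = 0 for j ≠ i, zᵢ ≠ 0 }; in other words, the variety of contacts of the foliation df = 0 with concentric spheres is the union of the n coordinate axes. -/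
/-!
Taking norms in `2 conj(λⱼ zⱼ) = ξ zⱼ` gives `‖ξ‖ = 2‖λⱼ‖` at every coordinate with `zⱼ ≠ 0`,
so distinct `‖λⱼ‖` leave room for only one nonzero coordinate. Conversely, on the `i`-th axis
the single equation `2 conj(λᵢ zᵢ) = ξ zᵢ` is solved by `ξ = 2 conj(λᵢ zᵢ) / zᵢ`.
-/

open ComplexConjugate

section Contact

variable {ι : Type*} (lam : ι → ℂ)

def contactSet : Set (ι → ℂ) :=
  {z | ∃ ξ : ℂ, ∀ j, 2 * conj (lam j) * conj (z j) = ξ * z j}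

theorem norm_eq_two_mul_norm_of_conj_eq {a w ξ : ℂ} (h : 2 * conj a * conj w = ξ * w)
    (hw : w ≠ 0) : ‖ξ‖ = 2 * ‖a‖ := by
  have hnorm := congrArg norm h
  simp only [norm_mul, Complex.norm_conj, Complex.norm_two] at hnorm
  exact (mul_right_cancel₀ (norm_ne_zero_iff.mpr hw) hnorm).symm

variable {lam}

theorem eq_zero_of_mem_contactSet (hdist : Pairwise fun i j => ‖lam i‖ ≠ ‖lam j‖)
    {z : ι → ℂ} (hz : z ∈ contactSet lam) {i j : ι} (hji : j ≠ i) (hi : z i ≠ 0) :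
    z j = 0 := by
  obtain ⟨ξ, hξ⟩ := hz
  by_contra hj
  have hξi := norm_eq_two_mul_norm_of_conj_eq (hξ i) hi
  have hξj := norm_eq_two_mul_norm_of_conj_eq (hξ j) hj
  exact hdist hji (by linarith)

theorem mem_contactSet_of_eq_zero_of_ne {z : ι → ℂ} {i : ι} (hz : ∀ j, j ≠ i → z j = 0)
    (hi : z i ≠ 0) : z ∈ contactSet lam := by
  refine ⟨2 * conj (lam i) * conj (z i) / z i, fun j => ?_⟩
  rcases eq_or_ne j i with rfl | hji
  · field_simp
  · simp [hz j hji]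

theorem contactSet_diff_zero (hdist : Pairwise fun i j => ‖lam i‖ ≠ ‖lam j‖) :
    contactSet lam \ {0} = ⋃ i, {z : ι → ℂ | (∀ j, j ≠ i → z j = 0) ∧ z i ≠ 0} := by
  ext z
  simp only [Set.mem_sdiff, Set.mem_singleton_iff, Set.mem_iUnion, Set.mem_ofPred_eq]
  constructor
  · rintro ⟨hz, hz0⟩
    obtain ⟨i, hi⟩ := Function.ne_iff.mp hz0
    exact ⟨i, fun j hji => eq_zero_of_mem_contactSet hdist hz hji hi, hi⟩
  · rintro ⟨i, hz, hi⟩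
    exact ⟨mem_contactSet_of_eq_zero_of_ne hz hi, fun h => hi (congrFun h i)⟩

end Contact

theorem stmt14_general {n : ℕ} (lam : Fin n → ℂ)
    (hdist : ∀ i j, i ≠ j → ‖lam i‖ ≠ ‖lam j‖) :
    {z : Fin n → ℂ | ∃ ξ : ℂ, ∀ j,
        2 * starRingEnd ℂ (lam j) * starRingEnd ℂ (z j) = ξ * z j} \ {0}
      = ⋃ i, {z : Fin n → ℂ | (∀ j, j ≠ i → z j = 0) ∧ z i ≠ 0} :=
  contactSet_diff_zero fun i j => hdist i j

/-- For `f(z) = Σ λⱼ zⱼ²` with the `λⱼ` nonzero of pairwise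
distinct absolute values, the variety of contacts
`Σ = {z : ∃ ξ, 2 conj(λⱼ) conj(zⱼ) = ξ zⱼ ∀ j}` minus the origin is the union
of the punctured coordinate axes. -/
theorem stmt14 {n : ℕ} (lam : Fin n → ℂ) (hlam : ∀ j, lam j ≠ 0)
    (hdist : ∀ i j, i ≠ j → ‖lam i‖ ≠ ‖lam j‖) :
    {z : Fin n → ℂ | ∃ ξ : ℂ, ∀ j,
        2 * starRingEnd ℂ (lam j) * starRingEnd ℂ (z j) = ξ * z j} \ {0}
      = ⋃ i, {z : Fin n → ℂ | (∀ j, j ≠ i → z j = 0) ∧ z i ≠ 0} :=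
  stmt14_general lam hdist
end

section
/- Let λ₁, ..., λₙ be nonzero complex numbers with |λ₁| > |λ₂| > ... > |λₙ|, and let aᵢ + i bᵢ = λᵢ/λ₁. On the leaf L_c = { z ∈ ℂⁿ : Σⱼ λⱼ zⱼ² = c } through a point p = (w₁, 0, ..., 0) with λ₁ w₁² = c, w₁ ≠ 0, the real Hessian of the restricted squared-distance function φ(z) = Σ|zⱼ|² at p has eigenvalues 1 ± |λᵢ/λ₁| for i = 2, ..., n (each appearing once, up to an overall positive factor 2). Consequently p is a nondegenerate critical point of φ|_{L_c} of Morse index 0. -/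
/-!
Write `μⱼ = λⱼ₊₁/λ₁` and `q(y) = Σ μⱼ yⱼ²`. The leaf equation gives `g(y)² = w₁² - q(y)`, so
`|g(y)|² = |w₁² - q(y)|` and near `0` the function `ψ` is `‖w₁² - q(y)‖ + ‖y‖²`, whatever the
branch `g`. Since `|μⱼ| < 1`, the triangle inequality `|w₁²| ≤ |w₁² - q| + |q| ≤ |w₁² - q| + ‖y‖²`
makes `0` a minimum.

The map `y ↦ w₁² - q(y)` is critical at `0`, so the Hessian of its norm there is the derivative
of `‖·‖` at `w₁²` applied to its Hessian `(v, u) ↦ -2 Σ μⱼ vⱼ uⱼ`. This gives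
`H(v, u) = 2 Re⟨v, u⟩ - 2 Re Σ βⱼ vⱼ uⱼ` with `βⱼ = (w̄₁²/|w₁|²) μⱼ`, so `|βⱼ| = |μⱼ|`. The
eigen-equation `H(v, ·) = t Re⟨v, ·⟩` decouples into `s vⱼ = conj (βⱼ vⱼ)` with `s = 1 - t/2`,
which has a solution `vⱼ ≠ 0` exactly when `|s| = |βⱼ|`.
-/

open Filter Topology ContinuousLinearMap

open scoped ComplexConjugate

section SecondDerivative

variable {E F G : Type*} [NormedAddCommGroup E] [NormedSpace ℝ E] [NormedAddCommGroup F]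
  [NormedSpace ℝ F] [NormedAddCommGroup G] [NormedSpace ℝ G]

theorem hasFDerivAt_fderiv_comp_of_fderiv_eq_zero {g : F → G} {f : E → F}
    {f' : E → E →L[ℝ] F} {f'' : E →L[ℝ] E →L[ℝ] F} {x : E} (hg : ContDiffAt ℝ 2 g (f x))
    (hf : ∀ᶠ y in 𝓝 x, HasFDerivAt f (f' y) y) (hf'x : f' x = 0) (hf' : HasFDerivAt f' f'' x) :
    HasFDerivAt (fderiv ℝ (g ∘ f)) ((compL ℝ E F G (fderiv ℝ g (f x))).comp f'') x := by
  have hfx : HasFDerivAt f (f' x) x := hf.self_of_nhds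
  have hg' : ∀ᶠ y in 𝓝 x, DifferentiableAt ℝ g (f y) :=
    hfx.continuousAt.eventually ((hg.eventually (by simp)).mono fun _ h =>
      h.differentiableAt (by simp))
  have hchain : fderiv ℝ (g ∘ f) =ᶠ[𝓝 x] fun y => (fderiv ℝ g (f y)).comp (f' y) := by
    filter_upwards [hf, hg'] with y hfy hgy
    exact (hgy.hasFDerivAt.comp y hfy).fderiv
  have hDg : DifferentiableAt ℝ (fun y => fderiv ℝ g (f y)) x :=
    ((hg.fderiv_right (m := 1) le_rfl).differentiableAt one_ne_zero).comp x
      hfx.differentiableAt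
  refine ((hDg.hasFDerivAt.clm_comp hf').congr_of_eventuallyEq hchain).congr_fderiv ?_
  simp [hf'x]

theorem hasFDerivAt_apply_self (B : E →L[ℝ] E →L[ℝ] G) (y : E) :
    HasFDerivAt (fun x => B x x) ((B + B.flip) y) y := by
  refine (B.hasFDerivAt_of_bilinear (hasFDerivAt_id y) (hasFDerivAt_id y)).congr_fderiv ?_
  ext u
  simp

theorem hasFDerivAt_fderiv_apply_self (B : E →L[ℝ] E →L[ℝ] G) (x : E) :
    HasFDerivAt (fderiv ℝ fun x => B x x) (B + B.flip) x := by
  have h : fderiv ℝ (fun x => B x x) = ⇑(B + B.flip) :=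
    funext fun y => (hasFDerivAt_apply_self B y).fderiv
  rw [h]
  exact (B + B.flip).hasFDerivAt

end SecondDerivative

section

variable {F : Type*} [NormedAddCommGroup F] [InnerProductSpace ℝ F]

theorem hasFDerivAt_norm {z : F} (hz : z ≠ 0) : HasFDerivAt norm (‖z‖⁻¹ • innerSL ℝ z) z := by
  have h := (hasStrictFDerivAt_norm_sq z).hasFDerivAt.sqrt (by positivity)
  simp only [Real.sqrt_sq (norm_nonneg _)] at h
  convert h using 1
  ext u
  simp only [smul_apply, innerSL_apply_apply, smul_eq_mul, one_div, mul_inv_rev, nsmul_eq_mul,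
    Nat.cast_ofNat]
  field_simp
end

noncomputable section

variable {m : ℕ}

def weightedDot (μ : Fin m → ℂ) : (Fin m → ℂ) →L[ℝ] (Fin m → ℂ) →L[ℝ] ℂ :=
  ∑ j, μ j • (mul ℝ ℂ).bilinearComp (proj j) (proj j)

def realDot : (Fin m → ℂ) →L[ℝ] (Fin m → ℂ) →L[ℝ] ℝ :=
  ∑ j, (innerSL ℝ).bilinearComp (proj j) (proj j)

@[simp] theorem weightedDot_apply (μ v u : Fin m → ℂ) :
    weightedDot μ v u = ∑ j, μ j * (v j * u j) := by
  simp [weightedDot, sum_apply]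

@[simp] theorem realDot_apply (v u : Fin m → ℂ) :
    realDot v u = ∑ j, (u j * conj (v j)).re := by
  simp [realDot, sum_apply, Complex.inner]

theorem eq_zero_of_forall_re_sum_mul_conj_eq_zero {d : Fin m → ℂ}
    (h : ∀ u : Fin m → ℂ, (∑ j, d j * conj (u j)).re = 0) : d = 0 := by
  funext j
  have hj := h (Pi.single j (d j))
  simp only [Pi.single_apply, apply_ite conj, map_zero, mul_ite, mul_zero, Finset.sum_ite_eq',
    Finset.mem_univ, if_true, Complex.mul_conj, Complex.ofReal_re] at hj
  simpa [Complex.normSq_eq_zero] using hj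

theorem exists_ne_zero_mul_eq_conj_mul_iff (s : ℝ) (β : ℂ) :
    (∃ z : ℂ, z ≠ 0 ∧ s * z = conj (β * z)) ↔ |s| = ‖β‖ := by
  constructor
  · rintro ⟨z, hz, h⟩
    have := congrArg norm h
    simp only [norm_mul, Complex.norm_real, Real.norm_eq_abs, Complex.norm_conj] at this
    exact mul_right_cancel₀ (norm_ne_zero_iff.2 hz) this
  · intro h
    rcases eq_or_ne β 0 with rfl | hβ
    · exact ⟨1, one_ne_zero, by simpa using h⟩
    have hs : s ≠ 0 := by
      rintro rfl
      exact hβ (norm_eq_zero.1 (by simpa using h.symm))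
    -- `z² = s β̄` forces `|z|² = s²`, hence `s z² = β̄ |z|² = β̄ z̄ z`.
    obtain ⟨z, hz⟩ := IsAlgClosed.exists_pow_nat_eq (s * conj β) two_pos
    have hz0 : z ≠ 0 := by
      rintro rfl
      simp_all
    have hnorm : ‖z‖ ^ 2 = s ^ 2 := by
      rw [← norm_pow, hz, norm_mul, Complex.norm_real, Real.norm_eq_abs, Complex.norm_conj, ← h,
        ← sq, sq_abs]
    refine ⟨z, hz0, mul_right_cancel₀ hz0 ?_⟩
    have hzz : conj z * z = s ^ 2 := by
      rw [Complex.conj_mul']; exact_mod_cast hnorm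
    rw [map_mul]
    linear_combination (s : ℂ) * hz - conj β * hzz

theorem forall_hessian_eq_iff (β v : Fin m → ℂ) (t : ℝ) :
    (∀ u : Fin m → ℂ, 2 * (∑ j, v j * conj (u j)).re - 2 * (∑ j, β j * (v j * u j)).re
        = t * (∑ j, v j * conj (u j)).re) ↔
      ∀ j, ((1 - t / 2 : ℝ) : ℂ) * v j = conj (β j * v j) := by
  have key : ∀ u : Fin m → ℂ,
      2 * (∑ j, v j * conj (u j)).re - 2 * (∑ j, β j * (v j * u j)).re
        - t * (∑ j, v j * conj (u j)).re
      = 2 * (∑ j, (((1 - t / 2 : ℝ) : ℂ) * v j - conj (β j * v j)) * conj (u j)).re := by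
    intro u
    simp only [Complex.re_sum, Finset.mul_sum, ← Finset.sum_sub_distrib]
    refine Finset.sum_congr rfl fun j _ => ?_
    simp only [Complex.mul_re, Complex.sub_re, Complex.sub_im, Complex.conj_re, Complex.conj_im,
      Complex.ofReal_re, Complex.ofReal_im, Complex.mul_im]
    ring
  constructor
  · intro h j
    have hd := eq_zero_of_forall_re_sum_mul_conj_eq_zero
      (d := fun j => ((1 - t / 2 : ℝ) : ℂ) * v j - conj (β j * v j))
      fun u => by linarith [key u, h u]
    exact sub_eq_zero.1 (congrFun hd j)
  · intro h u
    have hu := key u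
    simp only [h, sub_self, zero_mul, Finset.sum_const_zero, Complex.zero_re, mul_zero] at hu
    linarith

theorem setOf_hessian_eigenvalue_eq (β : Fin m → ℂ) :
    {t : ℝ | ∃ v : Fin m → ℂ, v ≠ 0 ∧ ∀ u : Fin m → ℂ,
        2 * (∑ j, v j * conj (u j)).re - 2 * (∑ j, β j * (v j * u j)).re
          = t * (∑ j, v j * conj (u j)).re}
      = {t : ℝ | ∃ j, t = 2 * (1 + ‖β j‖) ∨ t = 2 * (1 - ‖β j‖)} := by
  have hroots : ∀ (t : ℝ) j,
      (t = 2 * (1 + ‖β j‖) ∨ t = 2 * (1 - ‖β j‖)) ↔ |1 - t / 2| = ‖β j‖ := fun t j => by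
    rw [abs_eq (norm_nonneg _)]
    constructor <;> rintro (h | h) <;> [right; left; right; left] <;> linarith
  ext t
  simp only [Set.mem_ofPred_eq, forall_hessian_eq_iff, hroots, ← exists_ne_zero_mul_eq_conj_mul_iff]
  constructor
  · rintro ⟨v, hv, h⟩
    obtain ⟨j, hj⟩ := Function.ne_iff.1 hv
    exact ⟨j, v j, hj, h j⟩
  · rintro ⟨j, z, hz, h⟩
    refine ⟨Pi.single j z, by simpa using hz, fun k => ?_⟩
    rcases eq_or_ne k j with rfl | hk
    · simpa using h
    · simp [hk]

def leafDistSq (μ : Fin m → ℂ) (w : ℂ) (y : Fin m → ℂ) : ℝ :=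
  ‖w ^ 2 - ∑ j, μ j * y j ^ 2‖ + ∑ j, Complex.normSq (y j)

theorem fderiv_fderiv_leafDistSq_zero_apply (μ : Fin m → ℂ) {w : ℂ} (hw : w ≠ 0)
    (v u : Fin m → ℂ) :
    fderiv ℝ (fderiv ℝ (leafDistSq μ w)) 0 v u
      = 2 * (∑ j, v j * conj (u j)).re
        - 2 * (∑ j, (conj (w ^ 2) / ‖w ^ 2‖ * μ j) * (v j * u j)).re := by
  set B := weightedDot μ
  set f : (Fin m → ℂ) → ℂ := fun y => w ^ 2 - B y y
  have hf : ∀ y, HasFDerivAt f ((-(B + B.flip)) y) y := fun y =>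
    (hasFDerivAt_apply_self B y).const_sub (w ^ 2)
  have hf0 : f 0 ≠ 0 := by simp [f, hw]
  have hN := hasFDerivAt_fderiv_comp_of_fderiv_eq_zero (g := norm) (contDiffAt_norm ℝ hf0)
    (Eventually.of_forall hf) (by simp) (-(B + B.flip)).hasFDerivAt
  have hS := hasFDerivAt_fderiv_apply_self (realDot (m := m)) 0
  have hsplit : leafDistSq μ w = (norm ∘ f) + fun y => realDot y y := by
    funext y
    simp [leafDistSq, f, B, sq, Complex.mul_conj]
  have hsum : fderiv ℝ (leafDistSq μ w) =ᶠ[𝓝 0]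
      fun y => fderiv ℝ (norm ∘ f) y + fderiv ℝ (fun y => realDot y y) y := by
    filter_upwards [(hf 0).continuousAt.eventually_ne hf0] with y hy
    rw [hsplit]
    exact fderiv_add ((hf y).differentiableAt.norm ℝ hy)
      (hasFDerivAt_apply_self _ y).differentiableAt
  rw [((hN.add hS).congr_of_eventuallyEq hsum).fderiv, (hasFDerivAt_norm hf0).fderiv]
  have hf0w : f 0 = w ^ 2 := by simp [f]
  simp only [hf0w, add_apply, comp_apply, compL_apply, neg_apply, flip_apply, smul_apply,
    innerSL_apply_apply, Complex.inner, B, weightedDot_apply, realDot_apply, smul_eq_mul]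
  have hre : ∀ j, (u j * conj (v j)).re = (v j * conj (u j)).re := fun j => by
    rw [← Complex.conj_re, map_mul, Complex.conj_conj, mul_comm]
  have hsymm : ∑ j, μ j * (u j * v j) = ∑ j, μ j * (v j * u j) := by
    simp only [mul_comm (u _)]
  have hfactor : ∑ j, conj (w ^ 2) / ‖w ^ 2‖ * μ j * (v j * u j)
      = conj (w ^ 2) * (∑ j, μ j * (v j * u j)) / ‖w ^ 2‖ := by
    rw [Finset.mul_sum, Finset.sum_div]
    exact Finset.sum_congr rfl fun j _ => by ring
  rw [hfactor, hsymm, Finset.sum_congr rfl fun j _ => hre j, ← Complex.re_sum,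
    Complex.div_ofReal_re]
  simp only [Complex.mul_re, Complex.add_re, Complex.neg_re, Complex.add_im, Complex.neg_im]
  ring

theorem leafDistSq_zero_le {μ : Fin m → ℂ} (hμ : ∀ j, ‖μ j‖ ≤ 1) (w : ℂ) (y : Fin m → ℂ) :
    leafDistSq μ w 0 ≤ leafDistSq μ w y := by
  have hq : ‖∑ j, μ j * y j ^ 2‖ ≤ ∑ j, Complex.normSq (y j) := by
    refine (norm_sum_le _ _).trans (Finset.sum_le_sum fun j _ => ?_)
    rw [norm_mul, norm_pow, ← Complex.normSq_eq_norm_sq]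
    exact mul_le_of_le_one_left (Complex.normSq_nonneg _) (hμ j)
  have htri := norm_sub_norm_le (w ^ 2) (∑ j, μ j * y j ^ 2)
  simp only [leafDistSq, Pi.zero_apply, ne_eq, OfNat.ofNat_ne_zero, not_false_eq_true, zero_pow,
    mul_zero, Finset.sum_const_zero, sub_zero, map_zero, add_zero]
  linarith

theorem sq_eq_sub_of_mul_sq_add_eq {a z w : ℂ} (ha : a ≠ 0) (b y : Fin m → ℂ)
    (h : a * z ^ 2 + ∑ j, b j * y j ^ 2 = a * w ^ 2) :
    z ^ 2 = w ^ 2 - ∑ j, b j / a * y j ^ 2 := by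
  apply mul_left_cancel₀ ha
  rw [mul_sub, Finset.mul_sum]
  simp only [← mul_assoc, mul_div_cancel₀ _ ha]
  linear_combination h

end

theorem stmt18_general {m : ℕ} (lam : Fin (m + 1) → ℂ)
    (hlam : ∀ j, lam j ≠ 0)
    (hmono : ∀ i j : Fin (m + 1), i < j → ‖lam j‖ < ‖lam i‖)
    (w₁ : ℂ) (hw₁ : w₁ ≠ 0) (c : ℂ) (hc : c = lam 0 * w₁ ^ 2)
    (g : (Fin m → ℂ) → ℂ) (U : Set (Fin m → ℂ)) (hU : U ∈ nhds (0 : Fin m → ℂ))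
    (hleaf : ∀ y ∈ U, lam 0 * g y ^ 2 + ∑ j : Fin m, lam j.succ * y j ^ 2 = c)
    (ψ : (Fin m → ℂ) → ℝ)
    (hψ : ψ = fun y => Complex.normSq (g y) + ∑ j, Complex.normSq (y j)) :
    fderiv ℝ ψ 0 = 0 ∧
    {μ : ℝ | ∃ v : Fin m → ℂ, v ≠ 0 ∧ ∀ u : Fin m → ℂ,
        iteratedFDeriv ℝ 2 ψ 0 ![v, u] = μ * (∑ j, v j * starRingEnd ℂ (u j)).re}
      = {μ : ℝ | ∃ j : Fin m, μ = 2 * (1 + ‖lam j.succ / lam 0‖) ∨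
          μ = 2 * (1 - ‖lam j.succ / lam 0‖)} ∧
    IsLocalMin ψ 0 := by
  have hμ : ∀ j : Fin m, ‖lam j.succ / lam 0‖ ≤ 1 := fun j => by
    rw [norm_div, div_le_one (norm_pos_iff.2 (hlam 0))]
    exact (hmono 0 j.succ j.succ_pos).le
  have hψ_eq : ψ =ᶠ[𝓝 0] leafDistSq (fun j => lam j.succ / lam 0) w₁ :=
    eventually_of_mem hU fun y hy => by
      rw [hψ, leafDistSq, ← sq_eq_sub_of_mul_sq_add_eq (hlam 0) _ y (hc ▸ hleaf y hy), norm_pow,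
        ← Complex.normSq_eq_norm_sq]
  have hmin : IsLocalMin ψ 0 :=
    IsLocalMin.congr (Eventually.of_forall (leafDistSq_zero_le hμ w₁)) hψ_eq.symm
  refine ⟨hmin.fderiv_eq_zero, ?_, hmin⟩
  have hphase : ∀ j : Fin m, ‖conj (w₁ ^ 2) / ‖w₁ ^ 2‖ * (lam j.succ / lam 0)‖
      = ‖lam j.succ / lam 0‖ := fun j => by
    rw [norm_mul, norm_div, Complex.norm_conj, Complex.norm_real, norm_norm,
      div_self (by simpa using hw₁), one_mul]
  simp only [iteratedFDeriv_two_apply, Matrix.cons_val_zero, Matrix.cons_val_one,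
    hψ_eq.fderiv.fderiv_eq, fderiv_fderiv_leafDistSq_zero_apply _ hw₁, ← hphase]
  exact setOf_hessian_eigenvalue_eq _

/-- For `|λ₁| > |λ₂| > … > |λₙ|` (all nonzero), on the leaf
`L_c = {λ₁ z₁² + … + λₙ zₙ² = c}` through `p = (w₁,0,…,0)` (so `c = λ₁ w₁²`),
parametrized near `p` by a holomorphic function `z₁ = g(z₂,…,zₙ)`, the real
Hessian at `p` of the restricted squared-distance function
`ψ(y) = |g(y)|² + Σ |yⱼ|²` has eigenvalues `2(1 ± |λᵢ/λ₁|)`, `i = 2,…,n`;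
consequently `p` is a nondegenerate critical point of Morse index 0, i.e. a
local minimum. Here `n = m + 1` and `λ` is indexed by `Fin (m+1)`. -/
theorem stmt18 {m : ℕ} (hm : 1 ≤ m) (lam : Fin (m + 1) → ℂ)
    (hlam : ∀ j, lam j ≠ 0)
    (hmono : ∀ i j : Fin (m + 1), i < j → ‖lam j‖ < ‖lam i‖)
    (w₁ : ℂ) (hw₁ : w₁ ≠ 0) (c : ℂ) (hc : c = lam 0 * w₁ ^ 2)
    (g : (Fin m → ℂ) → ℂ) (U : Set (Fin m → ℂ)) (hU : U ∈ nhds (0 : Fin m → ℂ))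
    (hg : DifferentiableOn ℂ g U) (hg0 : g 0 = w₁)
    (hleaf : ∀ y ∈ U, lam 0 * g y ^ 2 + ∑ j : Fin m, lam j.succ * y j ^ 2 = c)
    (ψ : (Fin m → ℂ) → ℝ)
    (hψ : ψ = fun y => Complex.normSq (g y) + ∑ j, Complex.normSq (y j)) :
    fderiv ℝ ψ 0 = 0 ∧
    {μ : ℝ | ∃ v : Fin m → ℂ, v ≠ 0 ∧ ∀ u : Fin m → ℂ,
        iteratedFDeriv ℝ 2 ψ 0 ![v, u] = μ * (∑ j, v j * starRingEnd ℂ (u j)).re}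
      = {μ : ℝ | ∃ j : Fin m, μ = 2 * (1 + ‖lam j.succ / lam 0‖) ∨
          μ = 2 * (1 - ‖lam j.succ / lam 0‖)} ∧
    IsLocalMin ψ 0 :=
  stmt18_general lam hlam hmono w₁ hw₁ c hc g U hU hleaf ψ hψ
end
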